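/- Let a ≥ 0 be a real number. Set x₀ = a − ⌊a⌋ and recursively define, for n ≥ 1, λ̄ₙ = ⌊(Fₙ/F_{n−1})·x_{n−1}⌋ and xₙ = (Fₙ/F_{n−1})·x_{n−1} − λ̄ₙ. Then for every n ≥ 1 the digit λ̄ₙ lies in {0,1}, 0 ≤ xₙ < 1, and the partial sum Aₙ = ⌊a⌋ + Σ_{k=1}^{n} λ̄ₖ/Fₖ satisfies a − Aₙ = xₙ/Fₙ, so that 0 ≤ a − Aₙ < 1/Fₙ. -/

import Mathlib

/-!
Since `F_{n+1} ≤ 2 Fₙ`, the quantity `(F_{n+1}/Fₙ) xₙ` lies in `[0, 2)` as soon as `xₙ ∈ [0, 1)`,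
so its floor is a digit in `{0, 1}` and its fractional part `x_{n+1}` is again in `[0, 1)`.
The error identity telescopes: `xₙ/Fₙ − λ̄_{n+1}/F_{n+1} = x_{n+1}/F_{n+1}`.
-/

theorem Nat.fib_add_two_le_two_mul_fib_add_one (n : ℕ) : fib (n + 2) ≤ 2 * fib (n + 1) := by
  rw [fib_add_two, two_mul]
  exact Nat.add_le_add_right fib_le_fib_succ _

theorem Int.floor_mul_eq_zero_or_one {r y : ℝ} (hr₀ : 0 ≤ r) (hr₂ : r ≤ 2) (hy₀ : 0 ≤ y)
    (hy₁ : y < 1) : ⌊r * y⌋ = 0 ∨ ⌊r * y⌋ = 1 := by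
  have hnonneg : 0 ≤ ⌊r * y⌋ := Int.floor_nonneg.mpr (mul_nonneg hr₀ hy₀)
  have hlt_two : r * y < 2 := by nlinarith
  have hlt : ⌊r * y⌋ < 2 := Int.floor_lt.mpr (by exact_mod_cast hlt_two)
  omega

theorem sub_sum_Icc_div_eq_div {q x c : ℕ → ℝ} (hq : ∀ n, q n ≠ 0)
    (hx : ∀ n, x (n + 1) = q (n + 1) / q n * x n - c (n + 1)) (n : ℕ) :
    x 0 / q 0 - ∑ k ∈ Finset.Icc 1 n, c k / q k = x n / q n := by
  induction n with
  | zero => simp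
  | succ n ih =>
    rw [Finset.sum_Icc_succ_top (by omega), ← sub_sub, ih, hx]
    field_simp [hq n, hq (n + 1)]

theorem fib_greedy_recursion_general (a : ℝ) (x : ℕ → ℝ) (lam : ℕ → ℤ)
    (hx0 : x 0 = a - ⌊a⌋)
    (hlam : ∀ n : ℕ, 1 ≤ n →
      lam n = ⌊(Nat.fib (n + 1) : ℝ) / Nat.fib n * x (n - 1)⌋)
    (hx : ∀ n : ℕ, 1 ≤ n →
      x n = (Nat.fib (n + 1) : ℝ) / Nat.fib n * x (n - 1) - lam n) :
    ∀ n : ℕ, 1 ≤ n →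
      (lam n = 0 ∨ lam n = 1) ∧
      (0 ≤ x n ∧ x n < 1) ∧
      a - (⌊a⌋ + ∑ k ∈ Finset.Icc 1 n, (lam k : ℝ) / Nat.fib (k + 1))
        = x n / Nat.fib (n + 1) ∧
      (0 ≤ a - (⌊a⌋ + ∑ k ∈ Finset.Icc 1 n, (lam k : ℝ) / Nat.fib (k + 1)) ∧
       a - (⌊a⌋ + ∑ k ∈ Finset.Icc 1 n, (lam k : ℝ) / Nat.fib (k + 1))
         < 1 / Nat.fib (n + 1)) := by
  set F : ℕ → ℝ := fun k ↦ Nat.fib (k + 1)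
  have hF : ∀ k, 0 < F k := fun k ↦ by simp [F, Nat.fib_pos]
  have hstep : ∀ n, x (n + 1) = F (n + 1) / F n * x n - lam (n + 1) :=
    fun n ↦ hx (n + 1) le_add_self
  have hdigit : ∀ n, lam (n + 1) = ⌊F (n + 1) / F n * x n⌋ := fun n ↦ hlam (n + 1) le_add_self
  have hxmem : ∀ n, 0 ≤ x n ∧ x n < 1
    | 0 => by rw [hx0, Int.self_sub_floor]; exact ⟨Int.fract_nonneg a, Int.fract_lt_one a⟩
    | n + 1 => by
      rw [hstep, hdigit, Int.self_sub_floor]; exact ⟨Int.fract_nonneg _, Int.fract_lt_one _⟩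
  have hratio : ∀ n, F (n + 1) / F n ≤ 2 := fun n ↦ by
    rw [div_le_iff₀ (hF n)]
    simp only [F]
    exact_mod_cast Nat.fib_add_two_le_two_mul_fib_add_one n
  have herror : ∀ n, a - (⌊a⌋ + ∑ k ∈ Finset.Icc 1 n, (lam k : ℝ) / F k) = x n / F n := by
    intro n
    rw [← sub_sum_Icc_div_eq_div (c := fun k ↦ (lam k : ℝ)) (fun k ↦ (hF k).ne') hstep n, hx0,
      show F 0 = 1 by simp [F], div_one]
    ring
  intro n hn
  obtain ⟨n, rfl⟩ : ∃ m, n = m + 1 := ⟨n - 1, by omega⟩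
  refine ⟨?_, hxmem (n + 1), herror (n + 1), ?_, ?_⟩
  · rw [hdigit]
    exact Int.floor_mul_eq_zero_or_one (div_pos (hF _) (hF n)).le (hratio n) (hxmem n).1
      (hxmem n).2
  · rw [herror]; exact div_nonneg (hxmem _).1 (hF _).le
  · rw [herror]; exact div_lt_div_of_pos_right (hxmem _).2 (hF _)

/-- The greedy Fibonacci digit recursion: for `a ≥ 0`, with `x₀ = a − ⌊a⌋`,
`λ̄ₙ = ⌊(Fₙ/F_{n−1})·x_{n−1}⌋` and `xₙ = (Fₙ/F_{n−1})·x_{n−1} − λ̄ₙ`, every digit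
lies in `{0,1}`, `0 ≤ xₙ < 1`, and the partial sums `Aₙ = ⌊a⌋ + Σ_{k=1}^n λ̄ₖ/Fₖ`
satisfy `a − Aₙ = xₙ/Fₙ`, hence `0 ≤ a − Aₙ < 1/Fₙ`.
Here `Fₖ = Nat.fib (k+1)`, i.e. `F₀ = F₁ = 1`, `F₂ = 2`, `F₃ = 3`, `F₄ = 5`, …. -/
theorem fib_greedy_recursion (a : ℝ) (ha : 0 ≤ a) (x : ℕ → ℝ) (lam : ℕ → ℤ)
    (hx0 : x 0 = a - ⌊a⌋)
    (hlam : ∀ n : ℕ, 1 ≤ n →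
      lam n = ⌊(Nat.fib (n + 1) : ℝ) / Nat.fib n * x (n - 1)⌋)
    (hx : ∀ n : ℕ, 1 ≤ n →
      x n = (Nat.fib (n + 1) : ℝ) / Nat.fib n * x (n - 1) - lam n) :
    ∀ n : ℕ, 1 ≤ n →
      (lam n = 0 ∨ lam n = 1) ∧
      (0 ≤ x n ∧ x n < 1) ∧
      a - (⌊a⌋ + ∑ k ∈ Finset.Icc 1 n, (lam k : ℝ) / Nat.fib (k + 1))
        = x n / Nat.fib (n + 1) ∧
      (0 ≤ a - (⌊a⌋ + ∑ k ∈ Finset.Icc 1 n, (lam k : ℝ) / Nat.fib (k + 1)) ∧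
       a - (⌊a⌋ + ∑ k ∈ Finset.Icc 1 n, (lam k : ℝ) / Nat.fib (k + 1))
         < 1 / Nat.fib (n + 1)) :=
  fib_greedy_recursion_general a x lam hx0 hlam hx
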